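/- The set H_n = B_n \ α(C_n) generates B_n: every element of B_n is a composition t_0 ∘ s^k where t_0 ∈ H_n, k ≥ 0, and s is the transformation with s(i) = i+1 for i < n and s(n) = n. Moreover |H_n| = ⌊e·(n-1)!⌋ - ⌊e·(n-2)!⌋ for n ≥ 3. -/

import Mathlib

/-!
If `t ∈ α(C n)` then `t = s ∘ t'` with `t' ∈ C n ⊆ Bu n`, and `t'` takes a smaller value at the
last point than `t`; peeling off copies of `s` therefore ends in `H n`.

For the count, `α` is composition with `s`, injective on `C n` and landing in `Bu n`, so
`|H n| = |Bu n| - |C n|`. Elements of `B n k` whose values are all below `m` are the choices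
`t i ∈ (i, m)` for `i + 1 < k`, hence `(m - 1)!/(m - k)!` of them; summing over `k ≤ m` gives
`∑ j ≤ m - 1, (m - 1)!/j!`, which is `⌊e · (m - 1)!⌋` because the tail of `e · (m - 1)!` lies
in `[0, 1)`. Take `m = n` for `Bu n` and `m = n - 1` for `C n`.
-/

/-- `B n k` (for `1 ≤ k ≤ n`) : transformations `t` of `{1,…,n}` (encoded as
`Fin n`, 0-indexed; the 1-indexed value of `t i` is `(t i : ℕ) + 1`) with
`t(i) > i` for all `i < k` and `t(i) = k` for all `i ≥ k`. -/
def B (n k : ℕ) : Set (Fin n → Fin n) :=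
  {t | (∀ i : Fin n, (i : ℕ) + 1 < k → (i : ℕ) < (t i : ℕ)) ∧
       (∀ i : Fin n, k ≤ (i : ℕ) + 1 → (t i : ℕ) + 1 = k)}

/-- `Bu n = ⋃_{k=1}^{n} B n k`. -/
def Bu (n : ℕ) : Set (Fin n → Fin n) :=
  {t | ∃ k, 1 ≤ k ∧ k ≤ n ∧ t ∈ B n k}

/-- `C n` : transformations of `Bu n` all of whose (1-indexed) values are `< n`. -/
def C (n : ℕ) : Set (Fin n → Fin n) :=
  {t | t ∈ Bu n ∧ ∀ j : Fin n, (t j : ℕ) + 1 < n}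

/-- `α(C n)` : the image of `C n` under the shift `α` of all values up by one. -/
def alphaC (n : ℕ) : Set (Fin n → Fin n) :=
  {t | ∃ t0 ∈ C n, ∀ j : Fin n, (t j : ℕ) = (t0 j : ℕ) + 1}

/-- `H n = Bu n \ α(C n)`. -/
def H (n : ℕ) : Set (Fin n → Fin n) := Bu n \ alphaC n

open Finset
open scoped Nat

theorem sum_descFactorial_eq_factorial_mul (m : ℕ) :
    ((∑ j ∈ range (m + 1), m.descFactorial j : ℕ) : ℝ) =
      m ! * ∑ i ∈ range (m + 1), (1 : ℝ) / i ! := by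
  rw [Nat.cast_sum, mul_sum, ← sum_range_reflect]
  refine sum_congr rfl fun i hi => ?_
  have hi : i ≤ m := Nat.lt_succ_iff.mp (mem_range.mp hi)
  have key := Nat.factorial_mul_descFactorial (Nat.sub_le m i)
  rw [Nat.sub_sub_self hi] at key
  rw [show m + 1 - 1 - i = m - i by omega, ← key]
  push_cast
  field_simp

theorem floor_exp_one_mul_factorial {m : ℕ} (hm : 1 ≤ m) :
    ⌊Real.exp 1 * m !⌋₊ = ∑ j ∈ range (m + 1), m.descFactorial j := by
  set P := ∑ i ∈ range (m + 1), (1 : ℝ) / (i ! : ℝ)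
  have hP : P ≤ Real.exp 1 := by
    simpa [P] using Real.sum_le_exp_of_nonneg zero_le_one (m + 1)
  have hTail : Real.exp 1 ≤ P + (m + 2) / ((m + 1)! * (m + 1)) := by
    simpa [P, add_assoc, one_add_one_eq_two] using
      Real.exp_bound' zero_le_one le_rfl (Nat.succ_pos m)
  have hm' : (1 : ℝ) ≤ m := by exact_mod_cast hm
  have hfac : ((m + 1)! : ℝ) = (m + 1) * m ! := by push_cast [Nat.factorial_succ]; ring
  have hpos : (0 : ℝ) < m ! := by positivity
  rw [Nat.floor_eq_iff (by positivity), sum_descFactorial_eq_factorial_mul]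
  constructor
  · rw [mul_comm]; exact mul_le_mul_of_nonneg_right hP hpos.le
  · calc Real.exp 1 * m ! ≤ (P + (m + 2) / ((m + 1)! * (m + 1))) * m ! :=
          mul_le_mul_of_nonneg_right hTail hpos.le
      _ = m ! * P + (m + 2) / (m + 1) ^ 2 := by rw [hfac]; field_simp
      _ < m ! * P + 1 := by
          gcongr
          rw [div_lt_one (by positivity)]
          nlinarith

variable {n m k : ℕ}

def allowedValues (n m k : ℕ) (i : Fin n) : Finset (Fin n) :=
  if (i : ℕ) + 1 < k then univ.filter fun x => i < x ∧ (x : ℕ) < m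
  else univ.filter fun x => (x : ℕ) + 1 = k

theorem card_allowedValues (hk : 1 ≤ k) (hkm : k ≤ m) (hmn : m ≤ n) (i : Fin n) :
    #(allowedValues n m k i) = if (i : ℕ) + 1 < k then m - (i + 1) else 1 := by
  unfold allowedValues
  split_ifs with hi
  · have : (univ.filter fun x : Fin n => i < x ∧ (x : ℕ) < m) =
        (univ.filter fun x : Fin n => (x : ℕ) < m) \ univ.filter fun x => (x : ℕ) < i + 1 := by
      ext x; simp only [mem_filter, mem_univ, true_and, mem_sdiff, Fin.lt_def]; omega
    rw [this, card_sdiff_of_subset, Fin.card_filter_val_lt, Fin.card_filter_val_lt]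
    · omega
    · intro x; simp only [mem_filter, mem_univ, true_and]; omega
  · rw [card_eq_one]
    exact ⟨⟨k - 1, by omega⟩, by ext x; simp [Fin.ext_iff]; omega⟩

theorem mem_piFinset_allowedValues (hkm : k ≤ m) (t : Fin n → Fin n) :
    t ∈ Fintype.piFinset (allowedValues n m k) ↔ t ∈ B n k ∧ ∀ j, (t j : ℕ) < m := by
  simp only [Fintype.mem_piFinset, allowedValues, B, Set.mem_ofPred_eq]
  constructor
  · intro h
    refine ⟨⟨fun i hi => ?_, fun i hi => ?_⟩, fun j => ?_⟩
    · have hti := h i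
      rw [if_pos hi] at hti
      exact (mem_filter.mp hti).2.1
    · simpa [show ¬ (i : ℕ) + 1 < k by omega] using h i
    · have := h j
      split_ifs at this <;> simp at this <;> omega
  · rintro ⟨⟨hlt, heq⟩, hm⟩ i
    split_ifs with hi
    · simpa using ⟨hlt i hi, hm i⟩
    · simpa using heq i (by omega)

theorem prod_ite_lt_eq_descFactorial (hk : k ≤ n + 1) :
    ∏ i : Fin n, (if (i : ℕ) + 1 < k then m - (i + 1) else 1) = (m - 1).descFactorial (k - 1) := by
  rw [Fin.prod_univ_eq_prod_range (fun i => if i + 1 < k then m - (i + 1) else 1),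
    Nat.descFactorial_eq_prod_range,
    ← prod_subset (range_subset_range.mpr (show k - 1 ≤ n by omega))
      fun i _ hi => if_neg (by simp at hi; omega)]
  exact prod_congr rfl fun i hi => by simp at hi; rw [if_pos (by omega)]; omega

theorem val_last_add_one_of_mem_B (hn : 0 < n) (hkn : k ≤ n) {t : Fin n → Fin n}
    (ht : t ∈ B n k) :
    (t ⟨n - 1, by omega⟩ : ℕ) + 1 = k :=
  ht.2 _ (by simp only; omega)

theorem Bu_inter_bounded_eq_biUnion (hmn : m ≤ n) :
    {t : Fin n → Fin n | t ∈ Bu n ∧ ∀ j, (t j : ℕ) < m} =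
      ↑((range m).biUnion fun j => Fintype.piFinset (allowedValues n m (j + 1))) := by
  ext t
  simp only [Set.mem_ofPred_eq, coe_biUnion, coe_range, Set.mem_Iio, Set.mem_iUnion, mem_coe,
    exists_prop]
  constructor
  · rintro ⟨⟨k, hk, hkn, htk⟩, hm⟩
    have hkm : k ≤ m := by
      have := val_last_add_one_of_mem_B (by omega) hkn htk
      have := hm ⟨n - 1, by omega⟩
      omega
    exact ⟨k - 1, by omega, (mem_piFinset_allowedValues (by omega) t).mpr
      ⟨by rwa [Nat.sub_add_cancel hk], hm⟩⟩
  · rintro ⟨j, hj, ht⟩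
    obtain ⟨htk, hm⟩ := (mem_piFinset_allowedValues (by omega) t).mp ht
    exact ⟨⟨j + 1, by omega, by omega, htk⟩, hm⟩

theorem ncard_Bu_inter_bounded (hmn : m ≤ n) :
    {t : Fin n → Fin n | t ∈ Bu n ∧ ∀ j, (t j : ℕ) < m}.ncard =
      ∑ j ∈ range m, (m - 1).descFactorial j := by
  rw [Bu_inter_bounded_eq_biUnion hmn, Set.ncard_coe_finset, card_biUnion]
  · refine sum_congr rfl fun j hj => ?_
    have hj : j < m := mem_range.mp hj
    rw [Fintype.card_piFinset]
    simp_rw [card_allowedValues (by omega : 1 ≤ j + 1) (by omega) hmn]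
    rw [prod_ite_lt_eq_descFactorial (by omega), Nat.add_sub_cancel]
  · intro j₁ hj₁ j₂ hj₂ hne
    simp only [mem_coe, mem_range] at hj₁ hj₂
    refine disjoint_left.mpr fun t ht₁ ht₂ => hne ?_
    have e₁ := val_last_add_one_of_mem_B (by omega) (by omega)
      ((mem_piFinset_allowedValues (by omega) t).mp ht₁).1
    have e₂ := val_last_add_one_of_mem_B (by omega) (by omega)
      ((mem_piFinset_allowedValues (by omega) t).mp ht₂).1
    omega

theorem ncard_Bu (hn : 0 < n) :
    (Bu n).ncard = ∑ j ∈ range (n - 1 + 1), (n - 1).descFactorial j := by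
  rw [Nat.sub_add_cancel hn, ← ncard_Bu_inter_bounded le_rfl]
  congr 1
  ext t
  exact ⟨fun ht => ⟨ht, fun j => (t j).2⟩, And.left⟩

theorem ncard_C (hn : 1 < n) :
    (C n).ncard = ∑ j ∈ range (n - 2 + 1), (n - 2).descFactorial j := by
  rw [show n - 2 + 1 = n - 1 by omega, show n - 2 = n - 1 - 1 by omega,
    ← ncard_Bu_inter_bounded (Nat.sub_le n 1)]
  congr 1
  ext t
  exact and_congr_right fun _ => forall_congr' fun j => by omega

theorem alphaC_subset_Bu : alphaC n ⊆ Bu n := by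
  rintro t ⟨t₀, ⟨⟨k, hk, hkn, hB⟩, hlt⟩, hval⟩
  have hkn' : k < n := by
    have := val_last_add_one_of_mem_B (by omega) hkn hB
    have := hlt ⟨n - 1, by omega⟩
    omega
  refine ⟨k + 1, by omega, hkn', fun i hi => ?_, fun i hi => ?_⟩
  · have := hval i
    by_cases h : (i : ℕ) + 1 < k
    · have := hB.1 i h; omega
    · have := hB.2 i (by omega); omega
  · have := hval i
    have := hB.2 i (by omega)
    omega

section Shift

variable {s : Fin n → Fin n}

theorem alphaC_eq_image_comp (hs : ∀ i : Fin n, (i : ℕ) + 1 < n → (s i : ℕ) = i + 1) :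
    alphaC n = (s ∘ ·) '' C n := by
  ext t
  constructor
  · rintro ⟨t₀, ht₀, hval⟩
    exact ⟨t₀, ht₀, funext fun j => Fin.ext <| by simp [hs _ (ht₀.2 j), hval j]⟩
  · rintro ⟨t₀, ht₀, rfl⟩
    exact ⟨t₀, ht₀, fun j => hs _ (ht₀.2 j)⟩

theorem injOn_comp_C (hs : ∀ i : Fin n, (i : ℕ) + 1 < n → (s i : ℕ) = i + 1) :
    Set.InjOn (s ∘ ·) (C n) := by
  intro t₀ ht₀ t₁ ht₁ h
  funext j
  have := congrArg Fin.val (congrFun h j)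
  simp only [Function.comp_apply, hs _ (ht₀.2 j), hs _ (ht₁.2 j)] at this
  exact Fin.ext (by omega)

theorem exists_mem_H_eq_iterate (hs : ∀ i : Fin n, (i : ℕ) + 1 < n → (s i : ℕ) = i + 1)
    {t : Fin n → Fin n} (ht : t ∈ Bu n) :
    ∃ t₀ ∈ H n, ∃ k : ℕ, t = fun x => s^[k] (t₀ x) := by
  have hn : 0 < n := by obtain ⟨k, hk, hkn, _⟩ := ht; omega
  induction hv : (t ⟨n - 1, by omega⟩ : ℕ) using Nat.strong_induction_on generalizing t with
  | _ v ih =>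
    by_cases hα : t ∈ alphaC n
    · rw [alphaC_eq_image_comp hs] at hα
      obtain ⟨t₀, ht₀, rfl⟩ := hα
      have hlt : (t₀ ⟨n - 1, by omega⟩ : ℕ) < v := by
        rw [← hv]; simp only [Function.comp_apply, hs _ (ht₀.2 _)]; omega
      obtain ⟨u, hu, k, rfl⟩ := ih _ hlt ht₀.1 rfl
      exact ⟨u, hu, k + 1, funext fun x => (Function.iterate_succ_apply' s k (u x)).symm⟩
    · exact ⟨t, ⟨ht, hα⟩, 0, rfl⟩

end Shift

/-- `H n` generates `Bu n`: every element of `Bu n` equals `t₀ ∘ s^k` with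
`t₀ ∈ H n`, `k ≥ 0`, and `s` the shift (`s(i) = i+1` for `i < n`, `s(n) = n`;
`x (t₀ ∘ s^k) = s^k (t₀ x)`). Moreover, for `n ≥ 3`,
`|H n| = ⌊e·(n-1)!⌋ - ⌊e·(n-2)!⌋`. -/
theorem stmt18 (n : ℕ) (hn : 3 ≤ n) (s : Fin n → Fin n)
    (hs : ∀ i : Fin n, ((i : ℕ) + 1 < n → (s i : ℕ) = (i : ℕ) + 1) ∧
          ((i : ℕ) + 1 = n → s i = i)) :
    (∀ t ∈ Bu n, ∃ t0 ∈ H n, ∃ k : ℕ, t = fun x => s^[k] (t0 x)) ∧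
    (H n).ncard = ⌊Real.exp 1 * (Nat.factorial (n - 1) : ℝ)⌋₊ -
        ⌊Real.exp 1 * (Nat.factorial (n - 2) : ℝ)⌋₊ := by
  have hs' : ∀ i : Fin n, (i : ℕ) + 1 < n → (s i : ℕ) = i + 1 := fun i => (hs i).1
  refine ⟨fun t ht => exists_mem_H_eq_iterate hs' ht, ?_⟩
  have hα : (alphaC n).ncard = (C n).ncard := by
    rw [alphaC_eq_image_comp hs', (injOn_comp_C hs').ncard_image]
  rw [H, Set.ncard_sdiff alphaC_subset_Bu (Set.toFinite _), hα, ncard_Bu (by omega),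
    ncard_C (by omega), floor_exp_one_mul_factorial (by omega),
    floor_exp_one_mul_factorial (by omega)]
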